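/- Let w be a finite string over an alphabet Σ and let $ be a symbol strictly smaller than every character of Σ; write w$ = w ++ [$]. Let S be a nonempty finite set of nonempty substrings of w$ such that (i) no element of S is a suffix of w$, and (ii) S is lexicographically consecutive among substrings of w$: whenever u, v ∈ S and z is a substring of w$ with u ≤lex z ≤lex v, then z ∈ S. Then every element of S is a prefix of the lexicographically greatest element of S; moreover, S consists exactly of those prefixes of the greatest element whose length is at least the length of the lexicographically smallest element of S. -/
import Mathlib


/-- Non-strict lexicographic order on lists. -/
def lexLe {α : Type*} [LinearOrder α] (u v : List α) : Prop :=
  List.Lex (· < ·) u v ∨ u = v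

section Aux

variable {α : Type*} [LinearOrder α]

lemma lexLe_iff_le (u v : List α) : lexLe u v ↔ u ≤ v := by
  rw [le_iff_lt_or_eq]; exact Iff.rfl

lemma lex_append_right (u : List α) {t : List α} (ht : t ≠ []) :
    List.Lex (· < ·) u (u ++ t) := by
  induction u with
  | nil => cases t with
    | nil => exact absurd rfl ht
    | cons a l => exact List.Lex.nil
  | cons a l ih => exact List.Lex.cons ih

lemma lex_of_diff (p : List α) {a b : α} (h : a < b) (s t : List α) :
    List.Lex (· < ·) (p ++ a :: s) (p ++ b :: t) := by
  induction p with
  | nil => exact List.Lex.rel h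
  | cons c l ih => exact List.Lex.cons ih

lemma lex_cases {x g : List α} (h : List.Lex (· < ·) x g) :
    x <+: g ∨ ∃ p a b s t, a < b ∧ x = p ++ a :: s ∧ g = p ++ b :: t := by
  induction h with
  | nil => exact Or.inl (List.nil_prefix ..)
  | @rel a l b l' hab => exact Or.inr ⟨[], a, b, l, l', hab, rfl, rfl⟩
  | @cons a l l' _ ih =>
    rcases ih with h | ⟨p, c, d, s, t, hcd, hl, hl'⟩
    · obtain ⟨t, ht⟩ := h
      exact Or.inl ⟨t, by rw [List.cons_append, ht]⟩
    · exact Or.inr ⟨a :: p, c, d, s, t, hcd, by rw [hl]; rfl, by rw [hl']; rfl⟩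

end Aux

/-- Let `$` be smaller than every character of `w` and let `S` be a nonempty
    finite set of nonempty substrings of `w$ = w ++ [$]` such that (i) no element
    of `S` is a suffix of `w$`, and (ii) `S` is lexicographically consecutive
    among substrings of `w$`. Then every element of `S` is a prefix of the
    lexicographically greatest element `g` of `S`, and `S` consists exactly of
    the prefixes of `g` whose length is at least that of the smallest element. -/
theorem consecutive_substrings_are_prefixes {α : Type*} [LinearOrder α]
    (w : List α) (dollar : α)
    (hd : ∀ c ∈ w, dollar < c)
    (S : Finset (List α)) (hne : S.Nonempty)
    (hsub : ∀ x ∈ S, x ≠ [] ∧ x <:+: (w ++ [dollar]))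
    (hnosuf : ∀ x ∈ S, ¬ x <:+ (w ++ [dollar]))
    (hcons : ∀ u ∈ S, ∀ v ∈ S, ∀ z : List α, z ≠ [] → z <:+: (w ++ [dollar]) →
      lexLe u z → lexLe z v → z ∈ S) :
    ∃ g ∈ S, ∃ m ∈ S, (∀ x ∈ S, lexLe x g) ∧ (∀ x ∈ S, lexLe m x) ∧
      ∀ z : List α, z ∈ S ↔ (z <+: g ∧ m.length ≤ z.length) := by
  obtain ⟨g, hgS, hgmax⟩ : ∃ g ∈ S, ∀ x ∈ S, x ≤ g :=
    ⟨S.max' hne, S.max'_mem hne, fun x hx => S.le_max' x hx⟩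
  obtain ⟨m, hmS, hmmin⟩ : ∃ m ∈ S, ∀ x ∈ S, m ≤ x :=
    ⟨S.min' hne, S.min'_mem hne, fun x hx => S.min'_le x hx⟩
  -- extension lemma: if x ∈ S differs from g strictly below position |x|,
  -- then any extension of x that is an infix of w$ is also in S.
  have hext : ∀ (t : List α) (p : List α) (a b : α) (s s' : List α), a < b →
      ∀ x, x = p ++ a :: s → g = p ++ b :: s' → x ∈ S →
      (x ++ t) <:+: (w ++ [dollar]) → x ++ t ∈ S := by
    intro t
    induction t with
    | nil => intro _ _ _ _ _ _ x _ _ hxS _; simpa using hxS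
    | cons c t ih =>
      intro p a b s s' hab x hx hg hxS hinf
      have hxc : x ++ [c] = p ++ a :: (s ++ [c]) := by simp [hx]
      have hxcS : x ++ [c] ∈ S := by
        refine hcons x hxS g hgS (x ++ [c]) (by simp [hx]) ?_ ?_ ?_
        · exact List.IsInfix.trans ⟨[], t, by simp⟩ hinf
        · exact Or.inl (lex_append_right x (by simp))
        · exact Or.inl (by rw [hxc, hg]; exact lex_of_diff p hab _ _)
      have := ih p a b (s ++ [c]) s' hab (x ++ [c]) hxc hg hxcS
        (by simpa using hinf)
      simpa using this
  -- every element of S is a prefix of g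
  have hpre : ∀ x ∈ S, x <+: g := by
    intro x hxS
    rcases eq_or_lt_of_le (hgmax x hxS) with h | h
    · exact h ▸ List.prefix_refl x
    · rcases lex_cases h with h | ⟨p, a, b, s, s', hab, hxd, hgd⟩
      · exact h
      · exfalso
        obtain ⟨l, r, hw⟩ := (hsub x hxS).2
        have hsuf : (x ++ r) <:+ (w ++ [dollar]) := ⟨l, by rw [← hw]; simp⟩
        have hmem : x ++ r ∈ S :=
          hext r p a b s s' hab x hxd hgd hxS hsuf.isInfix
        exact hnosuf _ hmem hsuf
  refine ⟨g, hgS, m, hmS, fun x hx => (lexLe_iff_le x g).2 (hgmax x hx),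
    fun x hx => (lexLe_iff_le m x).2 (hmmin x hx), fun z => ⟨?_, ?_⟩⟩
  · intro hzS
    refine ⟨hpre z hzS, ?_⟩
    by_contra hlen
    push_neg at hlen
    have hzm : z <+: m := List.prefix_of_prefix_length_le (hpre z hzS) (hpre m hmS) hlen.le
    obtain ⟨t, ht⟩ := hzm
    have htne : t ≠ [] := by
      rintro rfl
      simp only [List.append_nil] at ht
      simp [ht] at hlen
    have hlex : List.Lex (· < ·) z m := by
      rw [← ht]; exact lex_append_right z htne
    exact absurd (lt_of_le_of_lt (hmmin z hzS) hlex) (lt_irrefl m)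
  · rintro ⟨hzg, hzlen⟩
    have hmz : m <+: z := List.prefix_of_prefix_length_le (hpre m hmS) hzg hzlen
    have hzne : z ≠ [] := by
      intro h
      have := (hsub m hmS).1
      rw [h] at hzlen
      simp at hzlen
      exact this hzlen
    refine hcons m hmS g hgS z hzne ?_ ?_ ?_
    · exact hzg.isInfix.trans (hsub g hgS).2
    · rw [lexLe_iff_le]
      obtain ⟨t, ht⟩ := hmz
      rcases eq_or_ne t [] with rfl | htne
      · simp only [List.append_nil] at ht; exact le_of_eq ht
      · refine le_of_lt ?_
        show List.Lex (· < ·) m z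
        rw [← ht]; exact lex_append_right m htne
    · rw [lexLe_iff_le]
      obtain ⟨t, ht⟩ := hzg
      rcases eq_or_ne t [] with rfl | htne
      · simp only [List.append_nil] at ht; exact le_of_eq ht
      · refine le_of_lt ?_
        show List.Lex (· < ·) z g
        rw [← ht]; exact lex_append_right z htne
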